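/- Let G be an optimal allocation path from x to b. Then for any i ≠ s in {1,…,k}, the points x_i and x_s do not belong to the same connected component of G, i.e., there is no finite sequence of edges of G, each traversed in either direction, joining x_i to x_s. -/

import Mathlib

open scoped BigOperators RealInnerProductSpace

noncomputable section

attribute [local instance] Classical.propDecidable

/-- Points of the ambient Euclidean space `ℝ^m`. -/
abbrev Pt (m : ℕ) := EuclideanSpace ℝ (Fin m)

/-- A weighted directed graph in `ℝ^m`: a finite vertex set, a finite set of
directed edges (ordered pairs of points, viewed as directed line segments), and
a weight function. -/
structure WDG (m : ℕ) where
  V : Finset (Pt m)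
  E : Finset (Pt m × Pt m)
  w : Pt m × Pt m → ℝ

namespace WDG

variable {m : ℕ}

/-- Edges join distinct vertices of the graph and carry positive weight. -/
def edgesOK (G : WDG m) : Prop :=
  ∀ e ∈ G.E, e.1 ∈ G.V ∧ e.2 ∈ G.V ∧ e.1 ≠ e.2 ∧ 0 < G.w e

/-- The underlying undirected (simple) graph. -/
def undirected (G : WDG m) : SimpleGraph (Pt m) :=
  SimpleGraph.fromRel (fun u v => (u, v) ∈ G.E)

/-- The cost `M_α(G) = Σ_{e ∈ E(G)} w(e)^α · length(e)`. -/
def cost (α : ℝ) (G : WDG m) : ℝ :=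
  ∑ e ∈ G.E, (G.w e) ^ α * dist e.1 e.2

/-- Total weight of edges starting at `v`. -/
def outflow (G : WDG m) (v : Pt m) : ℝ :=
  ∑ e ∈ G.E.filter (fun e => e.1 = v), G.w e

/-- Total weight of edges ending at `v`. -/
def inflow (G : WDG m) (v : Pt m) : ℝ :=
  ∑ e ∈ G.E.filter (fun e => e.2 = v), G.w e

end WDG

/-- Atomic measures are represented as finitely supported functions `ℝ^m →₀ ℝ`
with nonnegative values; `AtomicOn X c` also requires the atoms to lie in `X`. -/
def AtomicOn {m : ℕ} (X : Set (Pt m)) (c : Pt m →₀ ℝ) : Prop :=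
  (∀ z, 0 ≤ c z) ∧ ↑c.support ⊆ X

/-- The mass `m(c)` of an atomic measure. -/
def massOf {m : ℕ} (c : Pt m →₀ ℝ) : ℝ := c.sum fun _ t => t

/-- `G` is a transport path from `a` to `b` inside `X`: its vertices lie in `X`
and contain the atoms of `a` and `b`, its underlying undirected graph has no
cycles, and the balance equation holds at every vertex. -/
def IsTransportPath {m : ℕ} (X : Set (Pt m)) (G : WDG m) (a b : Pt m →₀ ℝ) : Prop :=
  G.edgesOK ∧ ↑G.V ⊆ X ∧
  (∀ z ∈ a.support, z ∈ G.V) ∧ (∀ z ∈ b.support, z ∈ G.V) ∧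
  G.undirected.IsAcyclic ∧
  ∀ v : Pt m, G.outflow v - G.inflow v = a v - b v

/-- `d_α(a,b)`: the minimal cost of a transport path from `a` to `b`. -/
def dCost {m : ℕ} (X : Set (Pt m)) (α : ℝ) (a b : Pt m →₀ ℝ) : ℝ :=
  sInf (WDG.cost α '' {G : WDG m | IsTransportPath X G a b})

/-- An optimal transport path from `a` to `b`. -/
def IsOptimalTP {m : ℕ} (X : Set (Pt m)) (α : ℝ) (G : WDG m) (a b : Pt m →₀ ℝ) : Prop :=
  IsTransportPath X G a b ∧
    ∀ G' : WDG m, IsTransportPath X G' a b → WDG.cost α G ≤ WDG.cost α G'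

/-- The atomic probability measure `b = Σ_j n_j δ_{y_j}` of households. -/
def bMeas {m ℓ : ℕ} (y : Fin ℓ → Pt m) (n : Fin ℓ → ℝ) : Pt m →₀ ℝ :=
  ∑ j, Finsupp.single (y j) (n j)

/-- An allocation path from the factory locations `x` to the households `(y,n)`:
a transport path to `b` from some atomic probability measure supported on the
factory locations. -/
def IsAllocPath {m k ℓ : ℕ} (X : Set (Pt m)) (x : Fin k → Pt m)
    (y : Fin ℓ → Pt m) (n : Fin ℓ → ℝ) (G : WDG m) : Prop :=
  ∃ a : Pt m →₀ ℝ, (∀ z, 0 ≤ a z) ∧ ↑a.support ⊆ Set.range x ∧ massOf a = 1 ∧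
    IsTransportPath X G a (bMeas y n)

/-- An optimal allocation path: it minimizes `M_α` over all allocation paths. -/
def IsOptimalAllocPath {m k ℓ : ℕ} (X : Set (Pt m)) (α : ℝ) (x : Fin k → Pt m)
    (y : Fin ℓ → Pt m) (n : Fin ℓ → ℝ) (G : WDG m) : Prop :=
  IsAllocPath X x y n G ∧
    ∀ G' : WDG m, IsAllocPath X x y n G' → WDG.cost α G ≤ WDG.cost α G'

/-- For an assignment map `S`, the part `b_i = Σ_{j : S(j) = i} n_j δ_{y_j}`. -/
def bPart {m k ℓ : ℕ} (y : Fin ℓ → Pt m) (n : Fin ℓ → ℝ) (S : Fin ℓ → Fin k)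
    (i : Fin k) : Pt m →₀ ℝ :=
  ∑ j ∈ Finset.univ.filter (fun j => S j = i), Finsupp.single (y j) (n j)

/-- The mass `m(b_i) = Σ_{j : S(j) = i} n_j`. -/
def mB {k ℓ : ℕ} (n : Fin ℓ → ℝ) (S : Fin ℓ → Fin k) (i : Fin k) : ℝ :=
  ∑ j ∈ Finset.univ.filter (fun j => S j = i), n j

/-- `E_α(S) = Σ_i d_α(m(b_i) δ_{x_i}, b_i)`. -/
def Ealpha {m k ℓ : ℕ} (X : Set (Pt m)) (α : ℝ) (x : Fin k → Pt m)
    (y : Fin ℓ → Pt m) (n : Fin ℓ → ℝ) (S : Fin ℓ → Fin k) : ℝ :=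
  ∑ i, dCost X α (Finsupp.single (x i) (mB n S i)) (bPart y n S i)

/-- An optimal assignment map minimizes `E_α` over all assignment maps. -/
def IsOptimalAssign {m k ℓ : ℕ} (X : Set (Pt m)) (α : ℝ) (x : Fin k → Pt m)
    (y : Fin ℓ → Pt m) (n : Fin ℓ → ℝ) (S : Fin ℓ → Fin k) : Prop :=
  ∀ S' : Fin ℓ → Fin k, Ealpha X α x y n S ≤ Ealpha X α x y n S'

/-- `ρ_α(σ,ε)`: equals `(σ/ε)^α − (σ/ε − 1)^α` for `σ > ε` (and for `σ = ε` when
`α ∈ (0,1)`), and equals `1` when `σ = ε` (covering also the convention for `α = 0`). -/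
def rho (α σ ε : ℝ) : ℝ :=
  if σ = ε then 1 else (σ / ε) ^ α - (σ / ε - 1) ^ α


/-- `G` is the disjoint union of the subgraphs `Gi`: the `Gi` have pairwise
disjoint vertex sets, each is a subgraph of `G` (with matching weights), and
the edges of `G` are exactly the (disjoint) union of their edges. -/
def IsDisjointUnion {m k : ℕ} (G : WDG m) (Gi : Fin k → WDG m) : Prop :=
  (∀ i i' : Fin k, i ≠ i' → Disjoint (Gi i).V (Gi i').V) ∧
  (∀ i, (Gi i).V ⊆ G.V) ∧
  (∀ i, (Gi i).E ⊆ G.E) ∧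
  (∀ i, ∀ e ∈ (Gi i).E, (Gi i).w e = G.w e) ∧
  G.E = Finset.univ.biUnion (fun i => (Gi i).E)

/-- The projection coordinate `π(z) = ⟨z − p, v⟩` along the line through `p`
in direction `v`. -/
def proj {m : ℕ} (p v z : Pt m) : ℝ := ⟪z - p, v⟫

/-- The constant `C = √(m−1)/(2^{1−(m−1)(1−α)} − 1) + 1`. -/
def Cconst (m : ℕ) (α : ℝ) : ℝ :=
  Real.sqrt ((m : ℝ) - 1) / ((2 : ℝ) ^ (1 - ((m : ℝ) - 1) * (1 - α)) - 1) + 1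

/-!
Suppose two factories lie in one component of the optimal path `G`. Pushing `t` units of flow
along a walk of the underlying undirected graph between two factories gives another allocation
path, with mass `t` moved from one factory to the other. If the component contains two factories
with positive supply, pushing `±ε` between them contradicts optimality by strict concavity of
`w ↦ w ^ α` when `α > 0`; when `α = 0` the cost only sees the edge set, and pushing the whole
supply of one to the other either kills an edge or gives an optimal path with fewer sources in
the component. So the component may be assumed to have a single source `z`. The underlying graph
is a forest and an optimal path has no antiparallel edges, so the flow through an edge is the net
supply on its tail side; hence every edge points away from `z`. Moving mass from `z` to the other
factory then lowers every weight along the path between them, and moving the largest admissible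
amount kills an edge, a strict improvement.
-/

open Finset Filter Topology

lemma exists_max_step {ι : Type*} (s : Finset ι) (w σ : ι → ℝ) (hw : ∀ i ∈ s, 0 < w i)
    (hσ : ∃ i ∈ s, σ i < 0) :
    ∃ t, 0 < t ∧ (∀ i ∈ s, 0 ≤ w i + t * σ i) ∧ ∃ i ∈ s, w i + t * σ i = 0 := by
  obtain ⟨i₀, hi₀, hmin⟩ := (s.filter (σ · < 0)).exists_min_image (fun i => w i / -σ i)
    (let ⟨i, hi, hσi⟩ := hσ; ⟨i, mem_filter.2 ⟨hi, hσi⟩⟩)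
  obtain ⟨hi₀, hσi₀⟩ := mem_filter.1 hi₀
  refine ⟨w i₀ / -σ i₀, div_pos (hw i₀ hi₀) (neg_pos.2 hσi₀), fun i hi => ?_,
    i₀, hi₀, by field_simp [hσi₀.ne]; ring⟩
  rcases lt_or_ge (σ i) 0 with hσi | hσi
  · have := hmin i (mem_filter.2 ⟨hi, hσi⟩)
    rw [le_div_iff₀ (neg_pos.2 hσi)] at this
    linarith
  · exact add_nonneg (hw i hi).le (mul_nonneg (div_pos (hw i₀ hi₀) (neg_pos.2 hσi₀)).le hσi)

lemma exists_small_step {ι : Type*} (s : Finset ι) (w σ : ι → ℝ) (hw : ∀ i ∈ s, 0 < w i)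
    {c : ℝ} (hc : 0 < c) : ∃ ε, 0 < ε ∧ ε ≤ c ∧ ∀ i ∈ s, ε * |σ i| < w i := by
  have hsmall : ∀ᶠ ε in 𝓝 (0 : ℝ), ε ≤ c ∧ ∀ i ∈ s, ε * |σ i| < w i := by
    refine (eventually_le_nhds hc).and ((eventually_all_finset s).2 fun i hi => ?_)
    have : Tendsto (fun ε : ℝ => ε * |σ i|) (𝓝 0) (𝓝 0) := by
      simpa using ((continuous_mul_const |σ i|).tendsto (0 : ℝ))
    exact this.eventually_lt_const (hw i hi)
  obtain ⟨ε, ⟨hεc, hε⟩, hεpos⟩ := ((hsmall.filter_mono nhdsWithin_le_nhds).and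
    (self_mem_nhdsWithin : Set.Ioi (0 : ℝ) ∈ 𝓝[>] 0)).exists
  exact ⟨ε, hεpos, hεc, hε⟩

lemma rpow_add_add_rpow_sub_lt {α w s : ℝ} (hα0 : 0 < α) (hα1 : α < 1) (hs : s ≠ 0)
    (hsw : |s| ≤ w) : (w + s) ^ α + (w - s) ^ α < 2 * w ^ α := by
  have h := (Real.strictConcaveOn_rpow hα0 hα1).2
    (Set.mem_Ici.2 (by linarith [neg_abs_le s] : (0 : ℝ) ≤ w + s))
    (Set.mem_Ici.2 (by linarith [le_abs_self s] : (0 : ℝ) ≤ w - s))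
    (by intro h; apply hs; linarith) (by norm_num : (0 : ℝ) < 1 / 2) (by norm_num : (0 : ℝ) < 1 / 2)
    (by norm_num)
  simp only [smul_eq_mul] at h
  rw [show 1 / 2 * (w + s) + 1 / 2 * (w - s) = w by ring] at h
  linarith

namespace WDG

variable {m : ℕ}

lemma undirected_adj {G : WDG m} {u v : Pt m} :
    G.undirected.Adj u v ↔ u ≠ v ∧ ((u, v) ∈ G.E ∨ (v, u) ∈ G.E) :=
  SimpleGraph.fromRel_adj _ u v

lemma edgesOK.adj {G : WDG m} (hG : G.edgesOK) {e : Pt m × Pt m} (he : e ∈ G.E) :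
    G.undirected.Adj e.1 e.2 :=
  undirected_adj.2 ⟨(hG e he).2.2.1, Or.inl he⟩

def netOut (G : WDG m) (d : Pt m × Pt m → ℝ) (v : Pt m) : ℝ :=
  ∑ e ∈ G.E with e.1 = v, d e - ∑ e ∈ G.E with e.2 = v, d e

lemma outflow_sub_inflow (G : WDG m) (v : Pt m) :
    G.outflow v - G.inflow v = G.netOut G.w v := rfl

lemma netOut_add (G : WDG m) (d d' : Pt m × Pt m → ℝ) (v : Pt m) :
    G.netOut (d + d') v = G.netOut d v + G.netOut d' v := by
  simp only [netOut, Pi.add_apply, sum_add_distrib]; ring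

lemma netOut_smul (G : WDG m) (c : ℝ) (d : Pt m × Pt m → ℝ) (v : Pt m) :
    G.netOut (c • d) v = c * G.netOut d v := by
  simp only [netOut, Pi.smul_apply, smul_eq_mul, ← mul_sum, mul_sub]

lemma netOut_single {G : WDG m} {e : Pt m × Pt m} (he : e ∈ G.E) (v : Pt m) :
    G.netOut (Pi.single e 1) v = (if e.1 = v then 1 else 0) - (if e.2 = v then 1 else 0) := by
  simp only [netOut, sum_pi_single', mem_filter, he, true_and]

lemma sum_netOut (G : WDG m) (d : Pt m × Pt m → ℝ) (S : Finset (Pt m)) :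
    ∑ v ∈ S, G.netOut d v =
      ∑ e ∈ G.E, ((if e.1 ∈ S then d e else 0) - (if e.2 ∈ S then d e else 0)) := by
  simp only [netOut, sum_sub_distrib, sum_filter]
  rw [sum_comm, sum_comm (s := S)]
  simp only [sum_ite_eq]

lemma le_outflow_of_netOut_eq_neg_one {G : WDG m} {σ : Pt m × Pt m → ℝ} {v : Pt m} {t : ℝ}
    (hin : ∀ e ∈ G.E, e.2 ≠ v) (hσ : G.netOut σ v = -1)
    (h0 : ∀ e ∈ G.E, 0 ≤ G.w e + t * σ e) : t ≤ G.outflow v := by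
  have hempty : G.E.filter (fun e => e.2 = v) = ∅ := filter_eq_empty_iff.2 hin
  rw [netOut, hempty, sum_empty, sub_zero] at hσ
  calc t = ∑ e ∈ G.E with e.1 = v, -(t * σ e) := by rw [sum_neg_distrib, ← mul_sum, hσ]; ring
    _ ≤ G.outflow v := sum_le_sum fun e he => by linarith [h0 e (mem_filter.1 he).1]

lemma inflow_eq_zero {G : WDG m} {v : Pt m} (hin : ∀ e ∈ G.E, e.2 ≠ v) : G.inflow v = 0 := by
  rw [inflow, filter_eq_empty_iff.2 hin, sum_empty]

def reweight (G : WDG m) (d : Pt m × Pt m → ℝ) : WDG m :=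
  ⟨G.V, G.E.filter (fun e => 0 < G.w e + d e), G.w + d⟩

variable {G : WDG m} {d : Pt m × Pt m → ℝ}

lemma undirected_reweight_le : (G.reweight d).undirected ≤ G.undirected := fun u v h => by
  rw [undirected_adj] at h ⊢
  exact ⟨h.1, h.2.imp (fun h => (mem_filter.1 h).1) (fun h => (mem_filter.1 h).1)⟩

lemma reweight_E_of_pos (hpos : ∀ e ∈ G.E, 0 < G.w e + d e) : (G.reweight d).E = G.E :=
  filter_true_of_mem hpos

lemma undirected_reweight_of_pos (hpos : ∀ e ∈ G.E, 0 < G.w e + d e) :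
    (G.reweight d).undirected = G.undirected := by
  rw [undirected, undirected, reweight_E_of_pos hpos]

lemma sum_reweight_filter (h0 : ∀ e ∈ G.E, 0 ≤ G.w e + d e) (Q : Pt m × Pt m → Prop)
    [DecidablePred Q] :
    ∑ e ∈ (G.reweight d).E with Q e, (G.reweight d).w e = ∑ e ∈ G.E with Q e, (G.w e + d e) := by
  rw [reweight, filter_comm]
  exact sum_filter_of_ne fun e he hne => lt_of_le_of_ne (h0 e (mem_filter.1 he).1) hne.symm

lemma netOut_reweight (h0 : ∀ e ∈ G.E, 0 ≤ G.w e + d e) (v : Pt m) :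
    (G.reweight d).outflow v - (G.reweight d).inflow v = G.netOut G.w v + G.netOut d v := by
  rw [outflow, inflow, sum_reweight_filter h0, sum_reweight_filter h0, ← netOut_add]
  rfl

lemma cost_reweight {α : ℝ} (hα : α ≠ 0) (h0 : ∀ e ∈ G.E, 0 ≤ G.w e + d e) :
    cost α (G.reweight d) = ∑ e ∈ G.E, (G.w e + d e) ^ α * dist e.1 e.2 := by
  refine sum_subset (filter_subset _ _) fun e he hne => ?_
  have : G.w e + d e = 0 := (h0 e he).antisymm' (not_lt.1 fun h => hne (mem_filter.2 ⟨he, h⟩))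
  simp [reweight, this, Real.zero_rpow hα]

lemma cost_zero_reweight (hpos : ∀ e ∈ G.E, 0 < G.w e + d e) :
    cost 0 (G.reweight d) = cost 0 G := by
  simp only [cost, Real.rpow_zero, reweight_E_of_pos hpos]

lemma cost_reweight_lt {α : ℝ} (hG : G.edgesOK)
    (hmono : ∀ e ∈ G.E, 0 < G.w e + d e → (G.w e + d e) ^ α ≤ G.w e ^ α)
    {e₀ : Pt m × Pt m} (he₀ : e₀ ∈ G.E) (hdead : G.w e₀ + d e₀ ≤ 0) :
    cost α (G.reweight d) < cost α G := by
  have hsub : (G.reweight d).E ⊆ G.E.erase e₀ := fun e he => by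
    obtain ⟨he, hpos⟩ := mem_filter.1 he
    exact mem_erase.2 ⟨by rintro rfl; linarith, he⟩
  have hlen : 0 < dist e₀.1 e₀.2 := dist_pos.2 (hG e₀ he₀).2.2.1
  calc cost α (G.reweight d)
      ≤ ∑ e ∈ G.E.erase e₀, G.w e ^ α * dist e.1 e.2 := by
        refine (sum_le_sum fun e he => ?_).trans
          (sum_le_sum_of_subset_of_nonneg hsub fun e _ _ => ?_)
        · exact mul_le_mul_of_nonneg_right (hmono e (mem_filter.1 he).1 (mem_filter.1 he).2)
            dist_nonneg
        · exact mul_nonneg (Real.rpow_nonneg (hG e (mem_of_mem_erase ‹_›)).2.2.2.le _) dist_nonneg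
    _ < ∑ e ∈ G.E.erase e₀, G.w e ^ α * dist e.1 e.2 + G.w e₀ ^ α * dist e₀.1 e₀.2 :=
        lt_add_of_pos_right _ (mul_pos (Real.rpow_pos_of_pos (hG e₀ he₀).2.2.2 _) hlen)
    _ = cost α G := sum_erase_add _ _ he₀

end WDG

section TransportPath

variable {m : ℕ} {X : Set (Pt m)} {G : WDG m} {a b : Pt m →₀ ℝ}

lemma IsTransportPath.edgesOK (hG : IsTransportPath X G a b) : G.edgesOK := hG.1

lemma IsTransportPath.source_mem (hG : IsTransportPath X G a b) : ∀ z ∈ a.support, z ∈ G.V :=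
  hG.2.2.1

lemma IsTransportPath.isAcyclic (hG : IsTransportPath X G a b) : G.undirected.IsAcyclic :=
  hG.2.2.2.2.1

lemma IsTransportPath.netOut_eq (hG : IsTransportPath X G a b) (v : Pt m) :
    G.netOut G.w v = a v - b v :=
  hG.2.2.2.2.2 v

lemma IsTransportPath.reweight {d : Pt m × Pt m → ℝ} {a' : Pt m →₀ ℝ}
    (hG : IsTransportPath X G a b) (h0 : ∀ e ∈ G.E, 0 ≤ G.w e + d e)
    (hd : ∀ v, G.netOut d v = a' v - a v) (ha' : ∀ z ∈ a'.support, z ∈ G.V) :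
    IsTransportPath X (G.reweight d) a' b := by
  have hbal := hG.netOut_eq
  obtain ⟨hOK, hVX, -, hbV, hacyc, -⟩ := hG
  refine ⟨fun e he => ?_, hVX, ha', hbV, hacyc.anti WDG.undirected_reweight_le, fun v => ?_⟩
  · obtain ⟨he, hpos⟩ := mem_filter.1 he
    exact ⟨(hOK e he).1, (hOK e he).2.1, (hOK e he).2.2.1, hpos⟩
  · rw [WDG.netOut_reweight h0, hbal, hd]; ring

lemma IsTransportPath.isBridge (hG : IsTransportPath X G a b) {e : Pt m × Pt m} (he : e ∈ G.E) :
    G.undirected.IsBridge s(e.1, e.2) :=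
  SimpleGraph.isAcyclic_iff_forall_adj_isBridge.1 hG.isAcyclic (hG.edgesOK.adj he)

def WDG.tailSide (G : WDG m) (e : Pt m × Pt m) : Finset (Pt m) :=
  G.V.filter ((G.undirected.deleteEdges {s(e.1, e.2)}).Reachable e.1)

lemma IsTransportPath.sum_tailSide (hG : IsTransportPath X G a b)
    (hanti : ∀ e ∈ G.E, e.swap ∉ G.E) {e : Pt m × Pt m} (he : e ∈ G.E) :
    ∑ p ∈ G.tailSide e, (a p - b p) = G.w e := by
  have hOK := hG.edgesOK
  have hside : ∀ e' ∈ G.E, e' ≠ e → (e'.1 ∈ G.tailSide e ↔ e'.2 ∈ G.tailSide e) := by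
    intro e' he' hne
    have hadj : (G.undirected.deleteEdges {s(e.1, e.2)}).Adj e'.1 e'.2 := by
      refine SimpleGraph.deleteEdges_adj.2 ⟨hOK.adj he', fun h => ?_⟩
      rcases Sym2.eq_iff.1 (Set.mem_singleton_iff.1 h) with ⟨h1, h2⟩ | ⟨h1, h2⟩
      · exact hne (Prod.ext h1 h2)
      · exact hanti e he (by rwa [Prod.swap, ← h1, ← h2])
    simp only [WDG.tailSide, mem_filter, (hOK e' he').1, (hOK e' he').2.1, true_and]
    exact ⟨fun h => h.trans hadj.reachable, fun h => h.trans hadj.symm.reachable⟩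
  have h1 : e.1 ∈ G.tailSide e := mem_filter.2 ⟨(hOK e he).1, .rfl⟩
  have h2 : e.2 ∉ G.tailSide e := fun h => hG.isBridge he (mem_filter.1 h).2
  simp_rw [← hG.netOut_eq, WDG.sum_netOut]
  rw [sum_eq_single e (fun e' he' hne => by simp [hside e' he' hne]) (fun h => (h he).elim)]
  simp [h1, h2]

lemma IsTransportPath.exists_pos_tailSide (hG : IsTransportPath X G a b) (hb : ∀ p, 0 ≤ b p)
    (hanti : ∀ e ∈ G.E, e.swap ∉ G.E) {e : Pt m × Pt m} (he : e ∈ G.E) :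
    ∃ p, (G.undirected.deleteEdges {s(e.1, e.2)}).Reachable e.1 p ∧ 0 < a p := by
  have hpos : ∑ p ∈ G.tailSide e, (0 : ℝ) < ∑ p ∈ G.tailSide e, (a p - b p) := by
    rw [hG.sum_tailSide hanti he, sum_const_zero]; exact (hG.edgesOK e he).2.2.2
  obtain ⟨p, hp, hlt⟩ := exists_lt_of_sum_lt hpos
  exact ⟨p, (mem_filter.1 hp).2, by linarith [hb p]⟩

end TransportPath

namespace WDG

variable {m : ℕ} {G : WDG m}

def stepFlow (G : WDG m) (u v : Pt m) : Pt m × Pt m → ℝ :=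
  if (u, v) ∈ G.E then Pi.single (u, v) 1 else -Pi.single (v, u) 1

def walkFlow (G : WDG m) : {p q : Pt m} → G.undirected.Walk p q → Pt m × Pt m → ℝ
  | _, _, .nil => 0
  | _, _, @SimpleGraph.Walk.cons _ _ u v _ _ P => G.stepFlow u v + G.walkFlow P

lemma netOut_stepFlow {u v : Pt m} (h : G.undirected.Adj u v) (z : Pt m) :
    G.netOut (G.stepFlow u v) z = (if u = z then 1 else 0) - (if v = z then 1 else 0) := by
  by_cases huv : (u, v) ∈ G.E
  · rw [stepFlow, if_pos huv, netOut_single huv]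
  · rw [stepFlow, if_neg huv]
    have hvu := (undirected_adj.1 h).2.resolve_left huv
    rw [← neg_one_smul ℝ (Pi.single _ _), netOut_smul, netOut_single hvu]
    ring

lemma netOut_walkFlow {p q : Pt m} (P : G.undirected.Walk p q) (z : Pt m) :
    G.netOut (G.walkFlow P) z = (if p = z then 1 else 0) - (if q = z then 1 else 0) := by
  induction P with
  | nil => simp [walkFlow, netOut]
  | cons h P ih => rw [walkFlow, netOut_add, netOut_stepFlow h, ih]; ring

lemma exists_walkFlow_ne_zero {p q : Pt m} (hpq : p ≠ q) (P : G.undirected.Walk p q) :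
    ∃ e ∈ G.E, G.walkFlow P e ≠ 0 := by
  by_contra! h
  have := G.netOut_walkFlow P p
  simp [netOut, sum_eq_zero fun e he => h e (mem_filter.1 he).1, hpq.symm] at this

end WDG

section MoveMass

variable {m : ℕ}

def moveMass (a : Pt m →₀ ℝ) (p q : Pt m) (t : ℝ) : Pt m →₀ ℝ :=
  a + Finsupp.single p t - Finsupp.single q t

lemma moveMass_apply (a : Pt m →₀ ℝ) (p q : Pt m) (t : ℝ) (z : Pt m) :
    moveMass a p q t z = a z + (if p = z then t else 0) - (if q = z then t else 0) := by
  simp [moveMass, Finsupp.single_apply]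

lemma massOf_moveMass (a : Pt m →₀ ℝ) (p q : Pt m) (t : ℝ) :
    massOf (moveMass a p q t) = massOf a := by
  simp only [massOf, moveMass]
  rw [Finsupp.sum_sub_index (fun _ _ _ => rfl), Finsupp.sum_add_index' (fun _ => rfl)
    (fun _ _ _ => rfl), Finsupp.sum_single_index rfl, Finsupp.sum_single_index rfl]
  ring

lemma support_moveMass_subset (a : Pt m →₀ ℝ) (p q : Pt m) (t : ℝ) :
    (moveMass a p q t).support ⊆ insert p (insert q a.support) := by
  intro z hz
  rw [Finsupp.mem_support_iff, moveMass_apply] at hz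
  by_contra h
  simp only [mem_insert, not_or, Finsupp.mem_support_iff, not_not] at h
  simp [Ne.symm h.1, Ne.symm h.2.1, h.2.2] at hz

lemma support_moveMass_all_subset_erase {a : Pt m →₀ ℝ} {p q : Pt m} (hpq : p ≠ q)
    (hp : p ∈ a.support) : (moveMass a p q (a q)).support ⊆ a.support.erase q := by
  intro z hz
  rcases mem_insert.1 (support_moveMass_subset a p q _ hz) with rfl | hz'
  · exact mem_erase.2 ⟨hpq, hp⟩
  rcases mem_insert.1 hz' with rfl | hz'
  · simp [moveMass_apply, hpq] at hz
  · exact mem_erase.2 ⟨fun h => by simp [h, moveMass_apply, hpq] at hz, hz'⟩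

lemma WDG.edgesOK.mem_V_of_walk {G : WDG m} (hG : G.edgesOK) {p q : Pt m}
    (P : G.undirected.Walk p q) (hpq : p ≠ q) : p ∈ G.V := by
  cases P with
  | nil => exact (hpq rfl).elim
  | cons h _ =>
    rcases (WDG.undirected_adj.1 h).2 with h | h
    exacts [(hG _ h).1, (hG _ h).2.1]

lemma IsTransportPath.pushAlong {X : Set (Pt m)} {G : WDG m} {a b : Pt m →₀ ℝ}
    (hG : IsTransportPath X G a b) {p q : Pt m} (hpq : p ≠ q) (P : G.undirected.Walk p q) {t : ℝ}
    (h0 : ∀ e ∈ G.E, 0 ≤ G.w e + t * G.walkFlow P e) :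
    IsTransportPath X (G.reweight (t • G.walkFlow P)) (moveMass a p q t) b := by
  refine hG.reweight h0 (fun v => ?_) fun z hz => ?_
  · rw [WDG.netOut_smul, WDG.netOut_walkFlow, moveMass_apply]; split_ifs <;> ring
  · rcases mem_insert.1 (support_moveMass_subset a p q t hz) with rfl | hz
    · exact hG.edgesOK.mem_V_of_walk P hpq
    rcases mem_insert.1 hz with rfl | hz
    · exact hG.edgesOK.mem_V_of_walk P.reverse hpq.symm
    · exact hG.source_mem z hz

end MoveMass

section Allocation

variable {m k ℓ : ℕ}

lemma bMeas_nonneg {y : Fin ℓ → Pt m} {n : Fin ℓ → ℝ} (hn : ∀ j, 0 ≤ n j) (p : Pt m) :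
    0 ≤ bMeas y n p := by
  rw [bMeas, Finsupp.finsetSum_apply]
  exact sum_nonneg fun j _ => by rw [Finsupp.single_apply]; split <;> simp [hn j]

def IsAllocSource (x : Fin k → Pt m) (a : Pt m →₀ ℝ) : Prop :=
  (∀ z, 0 ≤ a z) ∧ ↑a.support ⊆ Set.range x ∧ massOf a = 1

lemma IsAllocSource.moveMass {x : Fin k → Pt m} {a : Pt m →₀ ℝ} (ha : IsAllocSource x a)
    {p q : Pt m} (hpq : p ≠ q) (hp : p ∈ Set.range x) (hq : q ∈ Set.range x) {t : ℝ}
    (hap : 0 ≤ a p + t) (haq : t ≤ a q) : IsAllocSource x (moveMass a p q t) := by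
  refine ⟨fun z => ?_, fun z hz => ?_, by rw [massOf_moveMass, ha.2.2]⟩
  · rw [moveMass_apply]
    by_cases hz : p = z
    · subst hz; simp [hpq.symm]; linarith
    · by_cases hz' : q = z
      · subst hz'; simp [hz]; linarith
      · simp [hz, hz', ha.1 z]
  · rcases mem_insert.1 (support_moveMass_subset a p q t hz) with rfl | hz
    · exact hp
    rcases mem_insert.1 hz with rfl | hz
    · exact hq
    · exact ha.2.1 hz

lemma IsAllocSource.mem_range {x : Fin k → Pt m} {a : Pt m →₀ ℝ} (ha : IsAllocSource x a)
    {p : Pt m} (hp : 0 < a p) : p ∈ Set.range x :=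
  ha.2.1 (Finsupp.mem_support_iff.2 hp.ne')

lemma IsAllocSource.isAllocPath {X : Set (Pt m)} {x : Fin k → Pt m} {y : Fin ℓ → Pt m}
    {n : Fin ℓ → ℝ} {G : WDG m} {a : Pt m →₀ ℝ} (ha : IsAllocSource x a)
    (hG : IsTransportPath X G a (bMeas y n)) : IsAllocPath X x y n G :=
  ⟨a, ha.1, ha.2.1, ha.2.2, hG⟩

structure IsOptimalAllocFrom (X : Set (Pt m)) (α : ℝ) (x : Fin k → Pt m) (y : Fin ℓ → Pt m)
    (n : Fin ℓ → ℝ) (G : WDG m) (a : Pt m →₀ ℝ) : Prop where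
  source : IsAllocSource x a
  isTransportPath : IsTransportPath X G a (bMeas y n)
  cost_le : ∀ G', IsAllocPath X x y n G' → WDG.cost α G ≤ WDG.cost α G'

variable {X : Set (Pt m)} {α : ℝ} {x : Fin k → Pt m} {y : Fin ℓ → Pt m} {n : Fin ℓ → ℝ}
  {G : WDG m} {a : Pt m →₀ ℝ}

namespace IsOptimalAllocFrom

lemma cost_le_pushAlong (hG : IsOptimalAllocFrom X α x y n G a) {p q : Pt m} (hpq : p ≠ q)
    (hp : p ∈ Set.range x) (hq : q ∈ Set.range x) (P : G.undirected.Walk p q) {t : ℝ}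
    (h0 : ∀ e ∈ G.E, 0 ≤ G.w e + t * G.walkFlow P e) (hap : 0 ≤ a p + t) (haq : t ≤ a q) :
    WDG.cost α G ≤ WDG.cost α (G.reweight (t • G.walkFlow P)) :=
  hG.cost_le _ <| (hG.source.moveMass hpq hp hq hap haq).isAllocPath <|
    hG.isTransportPath.pushAlong hpq P h0

lemma swap_notMem (hα : 0 ≤ α) (hG : IsOptimalAllocFrom X α x y n G a) {e : Pt m × Pt m}
    (he : e ∈ G.E) : e.swap ∉ G.E := by
  intro hse
  have hOK := hG.isTransportPath.edgesOK
  have hne : e ≠ e.swap := fun h => (hOK e he).2.2.1 (congrArg Prod.fst h)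
  set c := min (G.w e) (G.w e.swap)
  have hc : 0 ≤ c := le_min (hOK e he).2.2.2.le (hOK _ hse).2.2.2.le
  -- lower both edges of the antiparallel pair by the smaller weight
  set d : Pt m × Pt m → ℝ := (-c) • (Pi.single e 1 + Pi.single e.swap 1)
  have hd : ∀ e', d e' = -c * ((if e' = e then 1 else 0) + if e' = e.swap then 1 else 0) := by
    intro e'; simp only [d, Pi.smul_apply, Pi.add_apply, Pi.single_apply, smul_eq_mul]
  have hd0 : ∀ e', d e' ≤ 0 := fun e' => by
    rw [hd]; exact mul_nonpos_of_nonpos_of_nonneg (neg_nonpos.2 hc) (by positivity)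
  have h0 : ∀ e' ∈ G.E, 0 ≤ G.w e' + d e' := by
    intro e' he'
    rw [hd]
    by_cases h1 : e' = e
    · subst h1; simp [hne]; exact min_le_left _ _
    by_cases h2 : e' = e.swap
    · subst h2; simp [hne.symm]; exact min_le_right _ _
    · simp [h1, h2, (hOK e' he').2.2.2.le]
  have hTP := hG.isTransportPath.reweight h0 (fun v => by
    simp only [d, WDG.netOut_smul, WDG.netOut_add, WDG.netOut_single he, WDG.netOut_single hse,
      Prod.fst_swap, Prod.snd_swap]; ring) hG.isTransportPath.source_mem
  have hdead : ∃ e' ∈ G.E, G.w e' + d e' ≤ 0 := by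
    rcases min_choice (G.w e) (G.w e.swap) with h | h
    · exact ⟨e, he, by rw [hd]; simp [hne, c, h]⟩
    · exact ⟨e.swap, hse, by rw [hd]; simp [hne.symm, c, h]⟩
  obtain ⟨e₀, he₀, hdead⟩ := hdead
  exact (hG.cost_le _ (hG.source.isAllocPath hTP)).not_gt <| WDG.cost_reweight_lt hOK
    (fun e' _ hpos => Real.rpow_le_rpow hpos.le (by linarith [hd0 e']) hα) he₀ hdead

/-- For `α > 0`, pushing `±ε` along a walk between two sources is admissible, and by strict
concavity of `w ↦ w ^ α` one of the two directions is strictly cheaper. -/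
lemma false_of_two_sources (hα0 : 0 < α) (hα1 : α < 1) (hG : IsOptimalAllocFrom X α x y n G a)
    {p q : Pt m} (hpq : p ≠ q) (hp : 0 < a p) (hq : 0 < a q) (P : G.undirected.Walk p q) :
    False := by
  have hOK := hG.isTransportPath.edgesOK
  set σ := G.walkFlow P
  obtain ⟨ε, hε, hεc, hεw⟩ :=
    exists_small_step G.E G.w σ (fun e he => (hOK e he).2.2.2) (lt_min hp hq)
  have hfeas : ∀ s, |s| ≤ ε → ∀ e ∈ G.E, 0 ≤ G.w e + s * σ e := fun s hs e he => by
    have : |s * σ e| ≤ ε * |σ e| := by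
      rw [abs_mul]; exact mul_le_mul_of_nonneg_right hs (abs_nonneg _)
    linarith [neg_abs_le (s * σ e), hεw e he]
  have hcost : ∀ s, |s| ≤ ε →
      WDG.cost α G ≤ ∑ e ∈ G.E, (G.w e + s * σ e) ^ α * dist e.1 e.2 := fun s hs => by
    have hs' := abs_le.1 hs
    have := hG.cost_le_pushAlong hpq (hG.source.mem_range hp) (hG.source.mem_range hq) P
      (hfeas s hs) (by linarith [min_le_left (a p) (a q)]) (by linarith [min_le_right (a p) (a q)])
    rwa [WDG.cost_reweight hα0.ne' (by simpa using hfeas s hs)] at this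
  have hterm : ∀ e ∈ G.E, σ e ≠ 0 →
      (G.w e + ε * σ e) ^ α + (G.w e + -ε * σ e) ^ α < 2 * G.w e ^ α := fun e he hσe => by
    rw [neg_mul, ← sub_eq_add_neg]
    refine rpow_add_add_rpow_sub_lt hα0 hα1 (mul_ne_zero hε.ne' hσe) ?_
    rw [abs_mul, abs_of_pos hε]; exact (hεw e he).le
  have hlt : ∑ e ∈ G.E, ((G.w e + ε * σ e) ^ α * dist e.1 e.2
      + (G.w e + -ε * σ e) ^ α * dist e.1 e.2) < ∑ e ∈ G.E, 2 * (G.w e ^ α * dist e.1 e.2) := by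
    obtain ⟨e₀, he₀, hσe₀⟩ := G.exists_walkFlow_ne_zero hpq P
    refine sum_lt_sum (fun e he => ?_) ⟨e₀, he₀, ?_⟩
    · rcases eq_or_ne (σ e) 0 with hσe | hσe
      · exact le_of_eq (by simp [hσe]; ring)
      · nlinarith [hterm e he hσe, dist_nonneg (x := e.1) (y := e.2)]
    · nlinarith [hterm e₀ he₀ hσe₀, dist_pos.2 (hOK e₀ he₀).2.2.1]
  rw [sum_add_distrib, ← mul_sum] at hlt
  linarith [hcost ε (abs_of_pos hε).le, hcost (-ε) (by rw [abs_neg, abs_of_pos hε]), show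
    WDG.cost α G = ∑ e ∈ G.E, G.w e ^ α * dist e.1 e.2 from rfl]

/-- For `α = 0` the cost only sees the edge set: pushing the whole mass of `q` to `p` along a
walk either kills an edge on the way, which is strictly cheaper, or keeps every edge and the
cost. -/
lemma exists_merge_of_zero (hG : IsOptimalAllocFrom X 0 x y n G a) {p q : Pt m} (hpq : p ≠ q)
    (hp : 0 < a p) (hq : 0 < a q) (P : G.undirected.Walk p q) :
    ∃ G', IsOptimalAllocFrom X 0 x y n G' (moveMass a p q (a q)) ∧
      G'.undirected = G.undirected := by
  have hOK := hG.isTransportPath.edgesOK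
  have hp' := hG.source.mem_range hp
  have hq' := hG.source.mem_range hq
  set σ := G.walkFlow P
  by_cases hall : ∀ e ∈ G.E, 0 < G.w e + a q * σ e
  · refine ⟨G.reweight (a q • σ), ⟨hG.source.moveMass hpq hp' hq' (by linarith) le_rfl,
      hG.isTransportPath.pushAlong hpq P fun e he => (hall e he).le, fun G' hG' => ?_⟩,
      WDG.undirected_reweight_of_pos hall⟩
    rw [WDG.cost_zero_reweight (d := a q • σ) hall]
    exact hG.cost_le G' hG'
  · push Not at hall
    obtain ⟨e₁, he₁, hdead₁⟩ := hall
    have hσ₁ : σ e₁ < 0 := by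
      by_contra! h; nlinarith [(hOK e₁ he₁).2.2.2]
    obtain ⟨t, ht, hfeas, e₀, he₀, hdead⟩ :=
      exists_max_step G.E G.w σ (fun e he => (hOK e he).2.2.2) ⟨e₁, he₁, hσ₁⟩
    have htq : t ≤ a q := by
      by_contra! h; nlinarith [hfeas e₁ he₁]
    exact absurd (hG.cost_le_pushAlong hpq hp' hq' P hfeas (by linarith) htq)
      (not_le.2 (WDG.cost_reweight_lt hOK (fun _ _ _ => by simp) he₀ hdead.le))

lemma exists_merge (hα0 : 0 ≤ α) (hα1 : α < 1) (hG : IsOptimalAllocFrom X α x y n G a)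
    {p q : Pt m} (hpq : p ≠ q) (hp : 0 < a p) (hq : 0 < a q) (hreach : G.undirected.Reachable p q) :
    ∃ G', IsOptimalAllocFrom X α x y n G' (moveMass a p q (a q)) ∧
      G'.undirected = G.undirected := by
  obtain ⟨P⟩ := hreach
  rcases hα0.eq_or_lt with rfl | hα
  · exact hG.exists_merge_of_zero hpq hp hq P
  · exact (hG.false_of_two_sources hα hα1 hpq hp hq P).elim

lemma exists_card_sources_le_one (hα0 : 0 ≤ α) (hα1 : α < 1)
    (hG : IsOptimalAllocFrom X α x y n G a) (v : Pt m) :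
    ∃ G' a', IsOptimalAllocFrom X α x y n G' a' ∧ G'.undirected = G.undirected ∧
      #(a'.support.filter (G.undirected.Reachable v)) ≤ 1 := by
  induction hN : #(a.support.filter (G.undirected.Reachable v)) using Nat.strong_induction_on
    generalizing G a with
  | _ N ih =>
  rcases le_or_gt N 1 with hN1 | hN1
  · exact ⟨G, a, hG, rfl, hN ▸ hN1⟩
  obtain ⟨p, hp, q, hq, hpq⟩ := one_lt_card.1 (hN ▸ hN1)
  obtain ⟨hpa, hpv⟩ := mem_filter.1 hp
  obtain ⟨hqa, hqv⟩ := mem_filter.1 hq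
  have hpos : ∀ z ∈ a.support, 0 < a z := fun z hz =>
    (hG.source.1 z).lt_of_ne' (Finsupp.mem_support_iff.1 hz)
  obtain ⟨G', hG', hU⟩ := hG.exists_merge hα0 hα1 hpq (hpos p hpa) (hpos q hqa)
    (hpv.symm.trans hqv)
  have hlt : #((moveMass a p q (a q)).support.filter (G'.undirected.Reachable v)) < N := by
    rw [hU, ← hN]
    calc _ ≤ #((a.support.filter (G.undirected.Reachable v)).erase q) := by
          rw [← filter_erase]; exact card_le_card (filter_subset_filter _
            (support_moveMass_all_subset_erase hpq hpa))
      _ < _ := card_erase_lt_of_mem hq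
  obtain ⟨G'', a'', hG'', hU', hcard⟩ := ih _ hlt hG' rfl
  exact ⟨G'', a'', hG'', hU'.trans hU, hU ▸ hcard⟩

lemma exists_source_reachable (hα : 0 ≤ α) (hn : ∀ j, 0 ≤ n j)
    (hG : IsOptimalAllocFrom X α x y n G a) {p q : Pt m} (hpq : p ≠ q)
    (hreach : G.undirected.Reachable p q) : ∃ z, 0 < a z ∧ G.undirected.Reachable p z := by
  obtain ⟨W⟩ := hreach
  have hadj := W.adj_snd (W.not_nil_of_ne hpq)
  obtain ⟨e, he, hpe⟩ : ∃ e ∈ G.E, G.undirected.Reachable p e.1 := by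
    rcases (WDG.undirected_adj.1 hadj).2 with h | h
    exacts [⟨_, h, .rfl⟩, ⟨_, h, hadj.reachable⟩]
  obtain ⟨z, hz, haz⟩ := hG.isTransportPath.exists_pos_tailSide (bMeas_nonneg hn)
    (fun _ he => hG.swap_notMem hα he) he
  exact ⟨z, haz, hpe.trans (hz.mono (SimpleGraph.deleteEdges_le _))⟩

section UniqueSource

variable (hα : 0 ≤ α) (hn : ∀ j, 0 ≤ n j) (hG : IsOptimalAllocFrom X α x y n G a) {z : Pt m}
  (huniq : ∀ p, G.undirected.Reachable z p → 0 < a p → p = z)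
include hα hn hG huniq

/-- `e` points away from `z`. -/
lemma reachable_deleteEdges_of_unique_source {e : Pt m × Pt m} (he : e ∈ G.E)
    (hze : G.undirected.Reachable z e.1) :
    (G.undirected.deleteEdges {s(e.1, e.2)}).Reachable e.1 z := by
  obtain ⟨p, hp, hap⟩ := hG.isTransportPath.exists_pos_tailSide (bMeas_nonneg hn)
    (fun _ he => hG.swap_notMem hα he) he
  obtain rfl := huniq p (hze.trans (hp.mono (SimpleGraph.deleteEdges_le _))) hap
  exact hp

lemma snd_ne_of_unique_source {e : Pt m × Pt m} (he : e ∈ G.E) : e.2 ≠ z := by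
  rintro rfl
  exact SimpleGraph.isBridge_iff.1 (hG.isTransportPath.isBridge he)
    (reachable_deleteEdges_of_unique_source hα hn hG huniq he
      (hG.isTransportPath.edgesOK.adj he).reachable.symm)

lemma walkFlow_nonpos_of_unique_source {v : Pt m} (P : G.undirected.Walk v z) (hP : P.IsPath)
    (e : Pt m × Pt m) : G.walkFlow P e ≤ 0 := by
  induction P with
  | nil => simp [WDG.walkFlow]
  | @cons u v' w h P ih =>
    rw [SimpleGraph.Walk.cons_isPath_iff] at hP
    -- the edge at `u` points toward `u`: otherwise both its ends would reach `w` around it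
    have hstep : (u, v') ∉ G.E := fun huv => by
      have hu : (G.undirected.deleteEdges {s(u, v')}).Reachable u w :=
        reachable_deleteEdges_of_unique_source hα hn hG huniq huv
          ⟨(SimpleGraph.Walk.cons h P).reverse⟩
      have hv' : (G.undirected.deleteEdges {s(u, v')}).Reachable v' w :=
        SimpleGraph.reachable_deleteEdges_iff_exists_walk.2
          ⟨P, fun hmem => hP.2 (P.fst_mem_support_of_mem_edges hmem)⟩
      exact SimpleGraph.isBridge_iff.1 (hG.isTransportPath.isBridge huv) (hu.trans hv'.symm)
    have hflow : G.stepFlow u v' e ≤ 0 := by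
      simp only [WDG.stepFlow, if_neg hstep, Pi.neg_apply, Pi.single_apply]
      split_ifs <;> norm_num
    simp only [WDG.walkFlow, Pi.add_apply]
    linarith [ih huniq hP.1]

/-- Moving mass from `z` to another factory `q` of its component only lowers the weights along
the path between them, and moving the largest admissible amount kills an edge. -/
lemma false_of_unique_source (hz : 0 < a z) {q : Pt m} (hq : q ∈ Set.range x) (hqz : q ≠ z)
    (hreach : G.undirected.Reachable q z) : False := by
  have hOK := hG.isTransportPath.edgesOK
  obtain ⟨P, hP⟩ : ∃ P : G.undirected.Walk q z, P.IsPath :=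
    let ⟨W⟩ := hreach; ⟨W.bypass, W.bypass_isPath⟩
  set σ := G.walkFlow P
  have hσ := walkFlow_nonpos_of_unique_source hα hn hG huniq P hP
  obtain ⟨e₁, he₁, hσ₁⟩ := G.exists_walkFlow_ne_zero hqz P
  obtain ⟨t, ht, hfeas, e₀, he₀, hdead⟩ :=
    exists_max_step G.E G.w σ (fun e he => (hOK e he).2.2.2) ⟨e₁, he₁, (hσ e₁).lt_of_ne hσ₁⟩
  have hin : ∀ e ∈ G.E, e.2 ≠ z := fun e he => snd_ne_of_unique_source hα hn hG huniq he
  -- `z` has no incoming edge, so it supplies at least the flow `t` leaving it along the path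
  have htz : t ≤ a z := by
    have hout := WDG.le_outflow_of_netOut_eq_neg_one hin
      (by simp [σ, WDG.netOut_walkFlow, hqz]) hfeas
    have hbal := hG.isTransportPath.netOut_eq z
    rw [← WDG.outflow_sub_inflow, WDG.inflow_eq_zero hin] at hbal
    linarith [bMeas_nonneg (y := y) hn z]
  exact absurd (hG.cost_le_pushAlong hqz hq (hG.source.mem_range hz) P hfeas
    (by linarith [hG.source.1 q]) htz) <| not_le.2 <| WDG.cost_reweight_lt hOK
      (fun e _ hpos => Real.rpow_le_rpow hpos.le (by simp; nlinarith [hσ e]) hα) he₀ hdead.le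

end UniqueSource

lemma not_reachable (hα0 : 0 ≤ α) (hα1 : α < 1) (hn : ∀ j, 0 ≤ n j)
    (hG : IsOptimalAllocFrom X α x y n G a) {p q : Pt m} (hp : p ∈ Set.range x)
    (hq : q ∈ Set.range x) (hpq : p ≠ q) : ¬ G.undirected.Reachable p q := by
  intro hreach
  obtain ⟨G', a', hG', hU, hcard⟩ := hG.exists_card_sources_le_one hα0 hα1 p
  rw [← hU] at hreach hcard
  obtain ⟨z, hz, hpz⟩ := hG'.exists_source_reachable hα0 hn hpq hreach
  have huniq : ∀ w, G'.undirected.Reachable z w → 0 < a' w → w = z := fun w hw haw =>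
    card_le_one.1 hcard w (mem_filter.2 ⟨Finsupp.mem_support_iff.2 haw.ne', hpz.trans hw⟩) z
      (mem_filter.2 ⟨Finsupp.mem_support_iff.2 hz.ne', hpz⟩)
  rcases eq_or_ne p z with rfl | hpz'
  · exact hG'.false_of_unique_source hα0 hn huniq hz hq hpq.symm hreach.symm
  · exact hG'.false_of_unique_source hα0 hn huniq hz hp hpz' hpz

end IsOptimalAllocFrom

end Allocation

theorem stmt_5_general {m k ℓ : ℕ} (X : Set (Pt m))
    (α : ℝ) (hα0 : 0 ≤ α) (hα1 : α < 1)
    (x : Fin k → Pt m) (hxinj : Function.Injective x)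
    (y : Fin ℓ → Pt m)
    (n : Fin ℓ → ℝ) (hn : ∀ j, 0 < n j)
    (G : WDG m) (hG : IsOptimalAllocPath X α x y n G) :
    ∀ i s : Fin k, i ≠ s → ¬ G.undirected.Reachable (x i) (x s) := by
  intro i s his
  obtain ⟨⟨a, ha0, hax, ham, hTP⟩, hcost⟩ := hG
  exact IsOptimalAllocFrom.not_reachable hα0 hα1 (fun j => (hn j).le)
    ⟨⟨ha0, hax, ham⟩, hTP, hcost⟩ ⟨i, rfl⟩ ⟨s, rfl⟩ (hxinj.ne his)

/-- On an optimal allocation path, two distinct factories are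
never joined by a sequence of edges (in the underlying undirected graph). -/
theorem stmt_5 {m k ℓ : ℕ} (X : Set (Pt m)) (hXc : IsCompact X) (hXconv : Convex ℝ X)
    (α : ℝ) (hα0 : 0 ≤ α) (hα1 : α < 1)
    (x : Fin k → Pt m) (hxinj : Function.Injective x) (hxX : ∀ i, x i ∈ X)
    (y : Fin ℓ → Pt m) (hyinj : Function.Injective y) (hyX : ∀ j, y j ∈ X)
    (n : Fin ℓ → ℝ) (hn : ∀ j, 0 < n j) (hnsum : ∑ j, n j = 1)
    (G : WDG m) (hG : IsOptimalAllocPath X α x y n G) :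
    ∀ i s : Fin k, i ≠ s → ¬ G.undirected.Reachable (x i) (x s) :=
  stmt_5_general X α hα0 hα1 x hxinj y n hn G hG

end
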